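/- Consider the scalar singular semiclassical ODE h z α'(z) = α(z) + z φ(z) (equivalently h α' = α/z + φ) near z = 0, with φ analytic on a neighborhood of 0, φ(z) = Σ_j φ_j z^j. Then: (i) there exists a formal power series solution α(z;h) = Σ_j α_j(h) z^j for every h in some interval (0,h₀] if and only if φ is a polynomial, in which case there is a polynomial solution; (ii) if φ is not a polynomial, then along the sequence h = 1/j for those j ≥ 1 with φ_{j−1} ≠ 0 (an infinite set), the equation has no solution analytic at z = 0, the general solution instead containing a term proportional to φ_{j−1} z^j log z. Consequently, there need not exist a diagonalizer analytic in a full neighborhood of a regular-singular point even when the coefficients are analytic there. -/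

import Mathlib

open Set

/-- Taylor coefficients at `0` of an analytic function `φ : ℂ → ℂ`. -/
noncomputable def taylorCoeff (φ : ℂ → ℂ) (j : ℕ) : ℂ :=
  (1 / (j.factorial : ℂ)) * iteratedDeriv j φ 0

/-- `αc : ℕ → ℂ` is a formal power-series solution `α(z) = Σ_j αc j z^j` of the scalar
singular equation `h z α' = α + z φ`, where `φ` has Taylor coefficients `φc`:
comparing coefficients, `αc 0 = 0` and `(j h − 1) αc j = φc (j−1)` for `j ≥ 1`. -/
def IsFormalSolution (φc : ℕ → ℂ) (h : ℝ) (αc : ℕ → ℂ) : Prop :=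
  αc 0 = 0 ∧ ∀ j : ℕ, 1 ≤ j → ((j : ℂ) * (h : ℂ) - 1) * αc j = φc (j - 1)

/-!
Comparing Taylor coefficients turns `h z α' = α + z φ` into `((k + 1) h - 1) αₖ₊₁ = φₖ`, which
is solvable exactly when `φₖ = 0` at every resonance `h = 1 / (k + 1)`; this gives (i) and the
formal and analytic obstructions in (ii). At the resonance `h = 1 / (k + 1)`, removing `φₖ zᵏ`
from `φ` removes the obstruction, and the remaining divisors satisfy
`|(i + 1) / (k + 1) - 1| ≥ 1 / (k + 1)`, so the formal solution converges. The removed term is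
restored by `(k + 1) φₖ zᵏ⁺¹ log z`, because `(1 / (k + 1)) z ∂ - 1` sends `zᵏ⁺¹ log z` to
`zᵏ⁺¹ / (k + 1)`.
-/

open Filter Topology FormalMultilinearSeries

section TaylorCoeff

variable {f g : ℂ → ℂ}

@[simp]
lemma taylorCoeff_zero (f : ℂ → ℂ) : taylorCoeff f 0 = f 0 := by
  simp [taylorCoeff]

lemma taylorCoeff_const_mul (c : ℂ) (f : ℂ → ℂ) (n : ℕ) :
    taylorCoeff (fun z => c * f z) n = c * taylorCoeff f n := by
  simp only [taylorCoeff, iteratedDeriv_const_mul_field]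
  ring

lemma taylorCoeff_sub (hf : AnalyticAt ℂ f 0) (hg : AnalyticAt ℂ g 0) (n : ℕ) :
    taylorCoeff (fun z => f z - g z) n = taylorCoeff f n - taylorCoeff g n := by
  simp only [taylorCoeff, iteratedDeriv_fun_sub hf.contDiffAt hg.contDiffAt]
  ring

lemma taylorCoeff_pow (m n : ℕ) :
    taylorCoeff (fun z => z ^ m) n = if n = m then 1 else 0 := by
  simp only [taylorCoeff, iteratedDeriv_fun_pow_zero]
  split_ifs with h
  · simp [h, Nat.factorial_ne_zero]
  · simp

lemma taylorCoeff_deriv (f : ℂ → ℂ) (n : ℕ) :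
    taylorCoeff (deriv f) n = (n + 1) * taylorCoeff f (n + 1) := by
  simp only [taylorCoeff, ← iteratedDeriv_succ', Nat.factorial_succ]
  push_cast
  field_simp

lemma taylorCoeff_id_mul_succ (hf : AnalyticAt ℂ f 0) (n : ℕ) :
    taylorCoeff (fun z => z * f z) (n + 1) = taylorCoeff f n := by
  have leibniz : iteratedDeriv (n + 1) (fun z => z * f z) 0 = (n + 1) * iteratedDeriv n f 0 := by
    rw [iteratedDeriv_fun_mul (f := fun z => z) contDiffAt_id hf.contDiffAt,
      Finset.sum_eq_single 1 (fun i _ hi => by simp [iteratedDeriv_fun_id_zero, hi])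
        (by simp)]
    simp [iteratedDeriv_fun_id_zero]
  simp only [taylorCoeff, leibniz, Nat.factorial_succ]
  push_cast
  field_simp

lemma AnalyticAt.hasFPowerSeriesAt_taylorCoeff (hf : AnalyticAt ℂ f 0) :
    HasFPowerSeriesAt f (ofScalars ℂ (taylorCoeff f)) 0 := by
  have : taylorCoeff f = fun n => iteratedDeriv n f 0 / n.factorial := by
    funext n
    simp [taylorCoeff, div_eq_inv_mul]
  simpa only [this] using hf.hasFPowerSeriesAt

lemma HasFPowerSeriesAt.taylorCoeff_eq {b : ℕ → ℂ}
    (hf : HasFPowerSeriesAt f (ofScalars ℂ b) 0) :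
    taylorCoeff f = b :=
  ofScalars_series_injective ℂ ℂ <|
    hf.analyticAt.hasFPowerSeriesAt_taylorCoeff.eq_formalMultilinearSeries hf

lemma AnalyticAt.taylorCoeff_eq_zero_iff (hf : AnalyticAt ℂ f 0) :
    (∀ n, taylorCoeff f n = 0) ↔ f =ᶠ[𝓝 0] 0 := by
  refine ⟨fun h => ?_, fun h n => ?_⟩
  · have hp := hf.hasFPowerSeriesAt_taylorCoeff
    rw [show taylorCoeff f = 0 from funext h, ofScalars_series_eq_zero_of_scalar_zero] at hp
    exact hp.eventually_eq_zero
  · simp [taylorCoeff, h.iteratedDeriv_eq n]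

lemma AnalyticAt.exists_norm_taylorCoeff_mul_pow_le (hf : AnalyticAt ℂ f 0) :
    ∃ r : NNReal, 0 < r ∧ ∃ C : ℝ, ∀ n, ‖taylorCoeff f n‖ * r ^ n ≤ C := by
  obtain ⟨r, hr0, hr⟩ := ENNReal.lt_iff_exists_nnreal_btwn.mp
    hf.hasFPowerSeriesAt_taylorCoeff.radius_pos
  obtain ⟨C, -, hC⟩ := norm_mul_pow_le_of_lt_radius _ hr
  exact ⟨r, by exact_mod_cast hr0, C, fun n => by simpa [ofScalars_norm] using hC n⟩

lemma exists_analyticAt_taylorCoeff_eq {b : ℕ → ℂ} {r : NNReal} (hr : 0 < r) {C : ℝ}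
    (hb : ∀ n, ‖b n‖ * r ^ n ≤ C) : ∃ β : ℂ → ℂ, AnalyticAt ℂ β 0 ∧ taylorCoeff β = b := by
  have hrad : 0 < (ofScalars ℂ b).radius :=
    lt_of_lt_of_le (by exact_mod_cast hr)
      ((ofScalars ℂ b).le_radius_of_bound C fun n => by simpa [ofScalars_norm] using hb n)
  have hβ := ((ofScalars ℂ b).hasFPowerSeriesOnBall hrad).hasFPowerSeriesAt
  exact ⟨_, hβ.analyticAt, hβ.taylorCoeff_eq⟩

end TaylorCoeff

lemma isFormalSolution_iff {φc : ℕ → ℂ} {h : ℝ} {αc : ℕ → ℂ} :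
    IsFormalSolution φc h αc ↔
      αc 0 = 0 ∧ ∀ k : ℕ, (((k + 1 : ℕ) : ℂ) * h - 1) * αc (k + 1) = φc k := by
  refine and_congr_right fun _ => ⟨fun H k => H (k + 1) (by omega), fun H j hj => ?_⟩
  obtain ⟨k, rfl⟩ := Nat.exists_eq_add_of_le' hj
  exact H k

lemma isFormalSolution_taylorCoeff_iff {h : ℝ} {α ψ : ℂ → ℂ} (hα : AnalyticAt ℂ α 0)
    (hψ : AnalyticAt ℂ ψ 0) :
    IsFormalSolution (taylorCoeff ψ) h (taylorCoeff α) ↔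
      ∀ᶠ z in 𝓝 0, (h : ℂ) * z * deriv α z = α z + z * ψ z := by
  set defect : ℂ → ℂ := fun z => z * ((h : ℂ) * deriv α z - ψ z) - α z
  have hderiv : AnalyticAt ℂ (fun z => (h : ℂ) * deriv α z) 0 :=
    analyticAt_const.mul hα.deriv
  have hinner : AnalyticAt ℂ (fun z => (h : ℂ) * deriv α z - ψ z) 0 := hderiv.sub hψ
  have hmul : AnalyticAt ℂ (fun z => z * ((h : ℂ) * deriv α z - ψ z)) 0 :=
    analyticAt_id.mul hinner
  have hdefect : AnalyticAt ℂ defect 0 := hmul.sub hα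
  have coeff_succ (k : ℕ) : taylorCoeff defect (k + 1) =
      (((k + 1 : ℕ) : ℂ) * h - 1) * taylorCoeff α (k + 1) - taylorCoeff ψ k := by
    rw [taylorCoeff_sub hmul hα, taylorCoeff_id_mul_succ hinner, taylorCoeff_sub hderiv hψ,
      taylorCoeff_const_mul, taylorCoeff_deriv]
    push_cast
    ring
  have hode_iff : (∀ᶠ z in 𝓝 0, (h : ℂ) * z * deriv α z = α z + z * ψ z) ↔ defect =ᶠ[𝓝 0] 0 :=
    eventually_congr <| .of_forall fun z => by
      simp only [defect, Pi.zero_apply]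
      constructor <;> intro H <;> linear_combination H
  rw [hode_iff, ← hdefect.taylorCoeff_eq_zero_iff, isFormalSolution_iff]
  constructor
  · rintro ⟨h0, hsucc⟩ (_ | k)
    · simpa [defect] using h0
    · rw [coeff_succ, hsucc, sub_self]
  · exact fun H =>
      ⟨by simpa [defect] using H 0, fun k => sub_eq_zero.1 (coeff_succ k ▸ H (k + 1))⟩

/-- At a resonance the denominator vanishes and `x / 0 = 0` sets that coefficient to `0`. -/
noncomputable def formalSolution (φc : ℕ → ℂ) (h : ℝ) : ℕ → ℂ
  | 0 => 0
  | k + 1 => φc k / (((k + 1 : ℕ) : ℂ) * h - 1)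

section FormalSolution

variable {φc : ℕ → ℂ} {h : ℝ}

lemma natCast_mul_sub_one_eq_zero_iff {n : ℕ} : ((n : ℂ) * h - 1 = 0) ↔ (n : ℝ) * h = 1 := by
  rw [sub_eq_zero]
  exact_mod_cast Iff.rfl

lemma IsFormalSolution.eq_zero_of_resonant {αc : ℕ → ℂ} (hα : IsFormalSolution φc h αc) {k : ℕ}
    (hk : ((k + 1 : ℕ) : ℝ) * h = 1) : φc k = 0 := by
  rw [← (isFormalSolution_iff.1 hα).2 k, natCast_mul_sub_one_eq_zero_iff.2 hk, zero_mul]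

lemma isFormalSolution_formalSolution (hφ : ∀ k : ℕ, ((k + 1 : ℕ) : ℝ) * h = 1 → φc k = 0) :
    IsFormalSolution φc h (formalSolution φc h) := by
  refine isFormalSolution_iff.2 ⟨rfl, fun k => ?_⟩
  by_cases hres : ((k + 1 : ℕ) : ℂ) * h - 1 = 0
  · rw [hres, zero_mul, hφ k (natCast_mul_sub_one_eq_zero_iff.1 hres)]
  · exact mul_div_cancel₀ _ hres

lemma natCast_mul_one_div_eq_one_iff {n m : ℕ} (hm : m ≠ 0) :
    (n : ℝ) * (1 / (m : ℝ)) = 1 ↔ n = m := by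
  rw [mul_one_div, div_eq_one_iff_eq (by positivity), Nat.cast_inj]

lemma not_exists_isFormalSolution_of_resonant {k : ℕ} (hk : φc k ≠ 0) :
    ¬ ∃ αc, IsFormalSolution φc (1 / ((k + 1 : ℕ) : ℝ)) αc := fun ⟨_, hα⟩ =>
  hk (hα.eq_zero_of_resonant ((natCast_mul_one_div_eq_one_iff k.succ_ne_zero).2 rfl))

lemma norm_formalSolution_resonant_le {j : ℕ} (hj : j ≠ 0) (k : ℕ) :
    ‖formalSolution φc (1 / (j : ℝ)) (k + 1)‖ ≤ j * ‖φc k‖ := by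
  set d : ℂ := ((k + 1 : ℕ) : ℂ) * ((1 / (j : ℝ) : ℝ) : ℂ) - 1
  show ‖φc k / d‖ ≤ j * ‖φc k‖
  rcases eq_or_ne d 0 with hd | hd
  · simp only [hd, div_zero, norm_zero]
    positivity
  have hjd : (j : ℂ) * d = (((k + 1 : ℕ) : ℤ) - j : ℤ) := by
    simp only [d]
    push_cast
    field_simp
  have hk : ((k + 1 : ℕ) : ℤ) - j ≠ 0 := fun h => by
    rw [h, Int.cast_zero] at hjd
    exact hd ((mul_eq_zero.1 hjd).resolve_left (by exact_mod_cast hj))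
  have one_le : 1 ≤ (j : ℝ) * ‖d‖ := by
    rw [← Complex.norm_natCast, ← norm_mul, hjd, Complex.norm_intCast]
    exact_mod_cast Int.one_le_abs hk
  rw [norm_div, div_le_iff₀ (norm_pos_iff.2 hd)]
  nlinarith [norm_nonneg (φc k)]

end FormalSolution

lemma exists_analyticAt_resonant_solution {ψ : ℂ → ℂ} (hψ : AnalyticAt ℂ ψ 0) {k : ℕ}
    (hres : taylorCoeff ψ k = 0) :
    ∃ β : ℂ → ℂ, AnalyticAt ℂ β 0 ∧ ∀ᶠ z in 𝓝 0,
      ((1 / ((k + 1 : ℕ) : ℝ) : ℝ) : ℂ) * z * deriv β z = β z + z * ψ z := by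
  have hsol : IsFormalSolution (taylorCoeff ψ) (1 / ((k + 1 : ℕ) : ℝ))
      (formalSolution (taylorCoeff ψ) (1 / ((k + 1 : ℕ) : ℝ))) :=
    isFormalSolution_formalSolution fun i hi => by
      rwa [(natCast_mul_one_div_eq_one_iff k.succ_ne_zero).1 hi |> Nat.succ_injective]
  obtain ⟨r, hr, C, hC⟩ := hψ.exists_norm_taylorCoeff_mul_pow_le
  have hC0 : 0 ≤ C := (norm_nonneg _).trans (by simpa using hC 0)
  obtain ⟨β, hβ, hcoeff⟩ := exists_analyticAt_taylorCoeff_eq hr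
    (b := formalSolution (taylorCoeff ψ) (1 / ((k + 1 : ℕ) : ℝ))) (C := (k + 1 : ℕ) * r * C) fun
      | 0 => by simp only [formalSolution, norm_zero, zero_mul]; positivity
      | i + 1 => calc
          _ ≤ (k + 1 : ℕ) * ‖taylorCoeff ψ i‖ * r ^ (i + 1) := by
            gcongr
            exact norm_formalSolution_resonant_le k.succ_ne_zero i
          _ = (k + 1 : ℕ) * r * (‖taylorCoeff ψ i‖ * r ^ i) := by ring
          _ ≤ (k + 1 : ℕ) * r * C := by gcongr; exact hC i
  exact ⟨β, hβ, (isFormalSolution_taylorCoeff_iff hβ hψ).1 (hcoeff ▸ hsol)⟩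

lemma hasDerivAt_pow_succ_mul_log {z : ℂ} (hz : z ∈ Complex.slitPlane) (k : ℕ) :
    HasDerivAt (fun w => w ^ (k + 1) * Complex.log w)
      (z ^ k * ((k + 1) * Complex.log z + 1)) z := by
  have hz0 : z ≠ 0 := Complex.slitPlane_ne_zero hz
  refine ((hasDerivAt_pow (k + 1) z).mul (Complex.hasDerivAt_log hz)).congr_deriv ?_
  field_simp
  push_cast
  ring

lemma ode_add_pow_succ_mul_log {φ β : ℂ → ℂ} {k : ℕ} {c z : ℂ} (hz : z ∈ Complex.slitPlane)
    (hβ : DifferentiableAt ℂ β z)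
    (hode : ((1 / ((k + 1 : ℕ) : ℝ) : ℝ) : ℂ) * z * deriv β z = β z + z * (φ z - c * z ^ k)) :
    ((1 / ((k + 1 : ℕ) : ℝ) : ℝ) : ℂ) * z
        * deriv (fun w => β w + ((k + 1 : ℕ) : ℂ) * c * w ^ (k + 1) * Complex.log w) z
      = (β z + ((k + 1 : ℕ) : ℂ) * c * z ^ (k + 1) * Complex.log z) + z * φ z := by
  have hshape : (fun w => β w + ((k + 1 : ℕ) : ℂ) * c * w ^ (k + 1) * Complex.log w) =
      fun w => β w + ((k + 1 : ℕ) : ℂ) * c * (w ^ (k + 1) * Complex.log w) := by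
    funext w
    ring
  have hderiv : HasDerivAt
      (fun w => β w + ((k + 1 : ℕ) : ℂ) * c * (w ^ (k + 1) * Complex.log w))
      (deriv β z + ((k + 1 : ℕ) : ℂ) * c * (z ^ k * ((k + 1) * Complex.log z + 1))) z :=
    hβ.hasDerivAt.add ((hasDerivAt_pow_succ_mul_log hz k).const_mul _)
  rw [hshape, hderiv.deriv]
  have hk : (k : ℂ) + 1 ≠ 0 := by exact_mod_cast k.succ_ne_zero
  push_cast at hode ⊢
  field_simp at hode ⊢
  linear_combination hode

lemma exists_log_solution {φ : ℂ → ℂ} (hφ : AnalyticAt ℂ φ 0) {ρ₀ : ℝ} (hρ₀ : 0 < ρ₀) (k : ℕ) :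
    ∃ (β : ℂ → ℂ) (ρ : ℝ), 0 < ρ ∧ ρ ≤ ρ₀ ∧ DifferentiableOn ℂ β (Metric.ball 0 ρ) ∧
      ∀ z ∈ Metric.ball (0 : ℂ) ρ, z ∈ Complex.slitPlane →
        ((1 / ((k + 1 : ℕ) : ℝ) : ℝ) : ℂ) * z
            * deriv (fun w => β w + ((k + 1 : ℕ) : ℂ) * taylorCoeff φ k * w ^ (k + 1)
                * Complex.log w) z
          = (β z + ((k + 1 : ℕ) : ℂ) * taylorCoeff φ k * z ^ (k + 1) * Complex.log z)
            + z * φ z := by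
  set c := taylorCoeff φ k
  have hmono : AnalyticAt ℂ (fun z => c * z ^ k) 0 := analyticAt_const.mul (analyticAt_id.pow k)
  have hres : taylorCoeff (fun z => φ z - c * z ^ k) k = 0 := by
    rw [taylorCoeff_sub hφ hmono, taylorCoeff_const_mul, taylorCoeff_pow, if_pos rfl, mul_one,
      sub_self]
  obtain ⟨β, hβ, hode⟩ := exists_analyticAt_resonant_solution (hφ.sub hmono) hres
  obtain ⟨ρ, hρ, hball⟩ :=
    Metric.eventually_nhds_iff_ball.1 (hode.and hβ.eventually_analyticAt)
  have hball' (z) (hz : z ∈ Metric.ball (0 : ℂ) (min ρ ρ₀)) :=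
    hball z (Metric.ball_subset_ball (min_le_left _ _) hz)
  refine ⟨β, min ρ ρ₀, lt_min hρ hρ₀, min_le_right _ _, fun z hz => ?_, fun z hz hslit => ?_⟩
  · exact (hball' z hz).2.differentiableAt.differentiableWithinAt
  · exact ode_add_pow_succ_mul_log hslit (hball' z hz).2.differentiableAt (hball' z hz).1

section Polynomial

variable {φc : ℕ → ℂ}

lemma exists_polynomial_formalSolution (hφ : ∃ m, ∀ j, m ≤ j → φc j = 0) :
    ∃ h₀ : ℝ, 0 < h₀ ∧ ∀ h ∈ Ioc (0 : ℝ) h₀,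
      ∃ αc, IsFormalSolution φc h αc ∧ ∃ m', ∀ j, m' ≤ j → αc j = 0 := by
  obtain ⟨m, hm⟩ := hφ
  refine ⟨1 / (m + 1), by positivity, fun h ⟨hpos, hle⟩ => ⟨formalSolution φc h,
    isFormalSolution_formalSolution fun k hk => hm k ?_, m + 1, ?_⟩⟩
  · have : (m + 1 : ℝ) ≤ k + 1 := by
      rw [le_div_iff₀ (by positivity)] at hle
      push_cast at hk
      nlinarith
    exact_mod_cast (by linarith : (m : ℝ) ≤ k)
  · rintro (_ | k) hk
    · omega
    · simp [formalSolution, hm k (by omega)]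

lemma eventually_eq_zero_of_exists_isFormalSolution
    (H : ∃ h₀ : ℝ, 0 < h₀ ∧ ∀ h ∈ Ioc (0 : ℝ) h₀, ∃ αc, IsFormalSolution φc h αc) :
    ∃ m, ∀ j, m ≤ j → φc j = 0 := by
  obtain ⟨h₀, hh₀, H⟩ := H
  by_contra! hnot
  obtain ⟨k, hk, hne⟩ := hnot ⌈1 / h₀⌉₊
  refine not_exists_isFormalSolution_of_resonant hne (H _ ⟨by positivity, ?_⟩)
  rw [div_le_iff₀ (by positivity), ← div_le_iff₀' hh₀]
  push_cast
  linarith [(Nat.ceil_le.1 hk)]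

lemma infinite_setOf_ne_zero (hφ : ¬ ∃ m, ∀ j, m ≤ j → φc j = 0) :
    {j : ℕ | 1 ≤ j ∧ φc (j - 1) ≠ 0}.Infinite := by
  push Not at hφ
  refine Set.infinite_of_forall_exists_gt fun a => ?_
  obtain ⟨k, hk, hne⟩ := hφ a
  exact ⟨k + 1, ⟨by omega, by simpa using hne⟩, by omega⟩

end Polynomial

/-- **Regular-singular point counterexample** (Example 4.1).  Consider the scalar singular
semiclassical ODE `h z α'(z) = α(z) + z φ(z)` near `z = 0`, with `φ` analytic near `0` with
Taylor coefficients `φ_j`.  Then: (i) a formal power-series solution exists for every `h` in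
some interval `(0,h₀]` if and only if `φ` is a polynomial, in which case there is a
polynomial solution; (ii) if `φ` is not a polynomial, the set of `j ≥ 1` with
`φ_{j−1} ≠ 0` is infinite, and for each such `j`, at the resonant value `h = 1/j` there is
neither a formal power-series solution nor a solution analytic at `z = 0`; instead there is
a solution on a slit neighborhood of `0` of the form `β(z) + c φ_{j−1} z^j log z` with `β`
analytic and `c ≠ 0`. -/
theorem regular_singular_counterexample
    (φ : ℂ → ℂ) (ρ₀ : ℝ) (hρ₀ : 0 < ρ₀)
    (hφ : DifferentiableOn ℂ φ (Metric.ball 0 ρ₀)) :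
    -- (i) formal solvability for all small h iff φ is a polynomial
    ((∃ h₀ : ℝ, 0 < h₀ ∧ ∀ h ∈ Ioc (0:ℝ) h₀, ∃ αc : ℕ → ℂ,
        IsFormalSolution (taylorCoeff φ) h αc)
      ↔ (∃ m : ℕ, ∀ j : ℕ, m ≤ j → taylorCoeff φ j = 0)) ∧
    -- ... in which case there is a polynomial solution
    ((∃ m : ℕ, ∀ j : ℕ, m ≤ j → taylorCoeff φ j = 0) →
      ∃ h₀ : ℝ, 0 < h₀ ∧ ∀ h ∈ Ioc (0:ℝ) h₀, ∃ αc : ℕ → ℂ,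
        IsFormalSolution (taylorCoeff φ) h αc ∧ ∃ m' : ℕ, ∀ j : ℕ, m' ≤ j → αc j = 0) ∧
    -- (ii) the resonant values h = 1/j obstruct analytic solvability
    ((¬ ∃ m : ℕ, ∀ j : ℕ, m ≤ j → taylorCoeff φ j = 0) →
      {j : ℕ | 1 ≤ j ∧ taylorCoeff φ (j - 1) ≠ 0}.Infinite ∧
      ∀ j : ℕ, 1 ≤ j → taylorCoeff φ (j - 1) ≠ 0 →
        (¬ ∃ αc : ℕ → ℂ, IsFormalSolution (taylorCoeff φ) (1 / (j : ℝ)) αc) ∧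
        (¬ ∃ (α : ℂ → ℂ) (ρ : ℝ), 0 < ρ ∧ ρ ≤ ρ₀ ∧
          DifferentiableOn ℂ α (Metric.ball 0 ρ) ∧
          ∀ z ∈ Metric.ball (0:ℂ) ρ,
            ((1 / (j : ℝ) : ℝ) : ℂ) * z * deriv α z = α z + z * φ z) ∧
        -- the general solution instead contains a term proportional to φ_{j−1} z^j log z
        (∃ cst : ℂ, cst ≠ 0 ∧ ∃ (β : ℂ → ℂ) (ρ : ℝ), 0 < ρ ∧ ρ ≤ ρ₀ ∧
          DifferentiableOn ℂ β (Metric.ball 0 ρ) ∧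
          ∀ z ∈ Metric.ball (0:ℂ) ρ, (z.im ≠ 0 ∨ 0 < z.re) →
            ((1 / (j : ℝ) : ℝ) : ℂ) * z
                * deriv (fun w => β w + cst * taylorCoeff φ (j - 1) * w ^ j
                    * Complex.log w) z
              = (β z + cst * taylorCoeff φ (j - 1) * z ^ j * Complex.log z) + z * φ z)) := by
  have hφa : AnalyticAt ℂ φ 0 := hφ.analyticAt (Metric.ball_mem_nhds 0 hρ₀)
  refine ⟨⟨eventually_eq_zero_of_exists_isFormalSolution, fun hpoly => ?_⟩,
    exists_polynomial_formalSolution,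
    fun hnot => ⟨infinite_setOf_ne_zero hnot, fun j hj hne => ?_⟩⟩
  · obtain ⟨h₀, hh₀, H⟩ := exists_polynomial_formalSolution hpoly
    exact ⟨h₀, hh₀, fun h hh => (H h hh).imp fun _ => And.left⟩
  obtain ⟨k, rfl⟩ := Nat.exists_eq_add_of_le' hj
  rw [Nat.add_sub_cancel] at hne ⊢
  refine ⟨not_exists_isFormalSolution_of_resonant hne, ?_, ?_⟩
  · rintro ⟨α, ρ, hρ, -, hα, hode⟩
    have hball := Metric.ball_mem_nhds (0 : ℂ) hρ
    exact not_exists_isFormalSolution_of_resonant hne ⟨taylorCoeff α,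
      (isFormalSolution_taylorCoeff_iff (hα.analyticAt hball) hφa).2
        (Filter.mem_of_superset hball hode)⟩
  · obtain ⟨β, ρ, hρ, hρρ₀, hβ, hlog⟩ := exists_log_solution hφa hρ₀ k
    exact ⟨_, Nat.cast_ne_zero.2 k.succ_ne_zero, β, ρ, hρ, hρρ₀, hβ,
      fun z hz hslit => hlog z hz (Complex.mem_slitPlane_iff.2 hslit.symm)⟩
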